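/- arXiv:2302.06109 — 2 statements merged into one kernel-verified Lean document; each statement's English description precedes it below -/
import Mathlib

section
/- Let 𝔄 be a unital C*-algebra with nonempty tracial state space 𝒯, and let (𝔄, G, Θ) be a C*-dynamical system with G a countable discrete amenable group. Then there exists a Θ-invariant tracial state on 𝔄. -/
open scoped ComplexOrder symmDiff

/-- A state on a unital C*-algebra, as an element of the weak-* dual. -/
def IsState {A : Type*} [NormedRing A] [StarRing A] [CStarRing A] [NormedAlgebra ℂ A]
    [CompleteSpace A] [StarModule ℂ A] (φ : WeakDual ℂ A) : Prop :=
  φ 1 = 1 ∧ ∀ a : A, 0 ≤ φ (star a * a)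

/-- An action by algebra automorphisms is a *-action if each automorphism preserves `star`,
i.e. each `Θ g` is a *-automorphism. -/
def IsStarAction {A G : Type*} [NormedRing A] [StarRing A] [NormedAlgebra ℂ A] [Group G]
    (Θ : G →* (A ≃ₐ[ℂ] A)) : Prop :=
  ∀ (g : G) (x : A), Θ g (star x) = star (Θ g x)

/-- The ergodic average `Avg_F x = (1/|F|) ∑_{g ∈ F} Θ_g x`. -/
noncomputable def avg {A G : Type*} [NormedRing A] [NormedAlgebra ℂ A] [Group G]
    (Θ : G →* (A ≃ₐ[ℂ] A)) (F : Finset G) (x : A) : A :=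
  ((F.card : ℂ))⁻¹ • ∑ g ∈ F, Θ g x

/-- A right Følner sequence: nonempty finite sets with `|F_k g Δ F_k| / |F_k| → 0`. -/
def RightFolner {G : Type*} [Group G] [DecidableEq G] (F : ℕ → Finset G) : Prop :=
  (∀ k, (F k).Nonempty) ∧ ∀ g : G, Filter.Tendsto
    (fun k => ((Finset.image (· * g) (F k) ∆ F k).card : ℝ) / (F k).card)
    Filter.atTop (nhds 0)

/-!
Average a tracial state `τ` along the Følner sets: the functionals `τ ∘ Avg_{F_k}` are again
tracial states, of norm at most `‖τ‖` because each `Θ g` is isometric. By Banach–Alaoglu they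
have a weak-* cluster point, which is a tracial state since the tracial states form a weak-*
closed set. It is `Θ`-invariant because `τ ∘ Avg_{F_k} ∘ Θ_h - τ ∘ Avg_{F_k}` has norm at most
`‖τ‖ |F_k h ∆ F_k| / |F_k|`, which tends to `0` by the Følner condition.
-/

open Filter Topology Finset

section OrbitAverage

lemma Finset.norm_sum_sub_sum_le_card_symmDiff_mul {ι F : Type*} [DecidableEq ι]
    [SeminormedAddCommGroup F] (S T : Finset ι) (f : ι → F) {M : ℝ} (hf : ∀ i, ‖f i‖ ≤ M) :
    ‖∑ i ∈ S, f i - ∑ i ∈ T, f i‖ ≤ #(S ∆ T) * M := by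
  have hsum (s : Finset ι) : ‖∑ i ∈ s, f i‖ ≤ #s * M :=
    (norm_sum_le_of_le s fun i _ => hf i).trans_eq (by simp)
  rw [← sum_sdiff_sub_sum_sdiff]
  calc ‖∑ i ∈ S \ T, f i - ∑ i ∈ T \ S, f i‖
      ≤ ‖∑ i ∈ S \ T, f i‖ + ‖∑ i ∈ T \ S, f i‖ := norm_sub_le _ _
    _ ≤ #(S \ T) * M + #(T \ S) * M := add_le_add (hsum _) (hsum _)
    _ = #(S ∆ T) * M := by
      rw [symmDiff_def, sup_eq_union, card_union_of_disjoint disjoint_sdiff_sdiff]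
      push_cast
      ring

variable {𝕜 E G : Type*} [RCLike 𝕜] [NormedAddCommGroup E] [NormedSpace 𝕜 E] [Group G]

noncomputable def orbitAverage (ρ : G →* (E ≃ₗᵢ[𝕜] E)) (τ : StrongDual 𝕜 E) (F : Finset G) :
    StrongDual 𝕜 E :=
  (#F : 𝕜)⁻¹ • ∑ g ∈ F, τ.comp ((ρ g).toContinuousLinearEquiv : E →L[𝕜] E)

variable (ρ : G →* (E ≃ₗᵢ[𝕜] E)) (τ : StrongDual 𝕜 E)

lemma orbitAverage_apply (F : Finset G) (x : E) :
    orbitAverage ρ τ F x = (#F : 𝕜)⁻¹ * ∑ g ∈ F, τ (ρ g x) := by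
  simp [orbitAverage]

lemma norm_apply_orbit_le (g : G) (x : E) : ‖τ (ρ g x)‖ ≤ ‖τ‖ * ‖x‖ :=
  (τ.le_opNorm _).trans_eq (by rw [LinearIsometryEquiv.norm_map])

lemma norm_orbitAverage_le (F : Finset G) : ‖orbitAverage ρ τ F‖ ≤ ‖τ‖ := by
  refine ContinuousLinearMap.opNorm_le_bound _ (norm_nonneg τ) fun x => ?_
  rcases F.eq_empty_or_nonempty with rfl | hF
  · simp only [orbitAverage, card_empty, Nat.cast_zero, inv_zero, sum_empty, smul_zero,
      zero_apply, norm_zero]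
    positivity
  have hcard : (0 : ℝ) < #F := by exact_mod_cast hF.card_pos
  rw [orbitAverage_apply, norm_mul, norm_inv, RCLike.norm_natCast, inv_mul_le_iff₀ hcard]
  exact (norm_sum_le_of_le F fun g _ => norm_apply_orbit_le ρ τ g x).trans_eq (by simp)

lemma RightFolner.tendsto_orbitAverage_apply_sub [DecidableEq G] {F : ℕ → Finset G}
    (hF : RightFolner F) (h : G) (x : E) :
    Tendsto (fun k => orbitAverage ρ τ (F k) (ρ h x) - orbitAverage ρ τ (F k) x) atTop (𝓝 0) := by
  have hshift (S : Finset G) : ∑ g ∈ S, τ (ρ g (ρ h x)) = ∑ g ∈ S.image (· * h), τ (ρ g x) := by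
    rw [sum_image fun a _ b _ hab => mul_right_cancel hab]
    simp
  refine squeeze_zero_norm (fun k => ?_)
    (by simpa only [zero_mul] using (hF.2 h).mul_const (‖τ‖ * ‖x‖))
  rw [orbitAverage_apply, orbitAverage_apply, hshift, ← mul_sub, norm_mul, norm_inv,
    RCLike.norm_natCast, div_mul_eq_mul_div, inv_mul_eq_div]
  exact div_le_div_of_nonneg_right
    (norm_sum_sub_sum_le_card_symmDiff_mul _ _ _ (norm_apply_orbit_le ρ τ · x)) (by positivity)

lemma MapClusterPt.eq_of_tendsto {X α : Type*} [TopologicalSpace X] [T2Space X] {x y : X}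
    {l : Filter α} {u : α → X} (hx : MapClusterPt x l u) (hy : Tendsto u l (𝓝 y)) : x = y :=
  eq_of_nhds_neBot (hx.clusterPt.mono hy)

theorem RightFolner.exists_invariant_mem [DecidableEq G] {F : ℕ → Finset G} (hF : RightFolner F)
    {C : Set (WeakDual 𝕜 E)} (hC : IsClosed C)
    (hτC : ∀ k, StrongDual.toWeakDual (orbitAverage ρ τ (F k)) ∈ C) :
    ∃ φ ∈ C, ∀ g x, φ (ρ g x) = φ x := by
  obtain ⟨φ, -, hφ⟩ := (WeakDual.isCompact_closedBall (0 : StrongDual 𝕜 E) ‖τ‖).exists_mapClusterPt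
    (f := atTop) (u := fun k => StrongDual.toWeakDual (orbitAverage ρ τ (F k)))
    (le_principal_iff.mpr <| mem_map.mpr <| univ_mem' fun k => by
      simpa using norm_orbitAverage_le ρ τ (F k))
  refine ⟨φ, hC.mem_of_mapClusterPt hφ (Eventually.of_forall hτC), fun h x => ?_⟩
  have hcont : Continuous fun ψ : WeakDual 𝕜 E => ψ (ρ h x) - ψ x :=
    (WeakDual.eval_continuous _).sub (WeakDual.eval_continuous _)
  exact sub_eq_zero.mp <| (hφ.continuousAt_comp hcont.continuousAt).eq_of_tendsto
    (hF.tendsto_orbitAverage_apply_sub ρ τ h x)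

end OrbitAverage

section TracialStates

variable {A G : Type*} [NormedRing A] [StarRing A] [CStarRing A] [NormedAlgebra ℂ A]
  [CompleteSpace A] [StarModule ℂ A] [Group G]

variable (A) in
def tracialStates : Set (WeakDual ℂ A) :=
  {φ | IsState φ ∧ ∀ x y : A, φ (x * y) = φ (y * x)}

lemma isClosed_tracialStates : IsClosed (tracialStates A) := by
  simp only [tracialStates, IsState, Set.ofPred_and, Set.ofPred_forall]
  have hev (a : A) : Continuous fun φ : WeakDual ℂ A => φ a := WeakDual.eval_continuous a
  exact ((isClosed_eq (hev 1) continuous_const).inter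
    (isClosed_iInter fun a => isClosed_le continuous_const (hev _))).inter
    (isClosed_iInter fun x => isClosed_iInter fun y => isClosed_eq (hev _) (hev _))

namespace IsStarAction

variable {Θ : G →* (A ≃ₐ[ℂ] A)}

lemma norm_apply (hΘ : IsStarAction Θ) (g : G) (x : A) : ‖Θ g x‖ = ‖x‖ := by
  let _ : CStarAlgebra A := ⟨⟩
  exact StarAlgEquiv.norm_map (StarAlgEquiv.ofAlgEquiv (Θ g) (hΘ g)) x

noncomputable def toLinearIsometryEquiv (hΘ : IsStarAction Θ) : G →* (A ≃ₗᵢ[ℂ] A) where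
  toFun g := { (Θ g).toLinearEquiv with norm_map' := hΘ.norm_apply g }
  map_one' := by ext; simp
  map_mul' g h := by ext x; exact DFunLike.congr_fun (map_mul Θ g h) x

@[simp]
lemma toLinearIsometryEquiv_apply (hΘ : IsStarAction Θ) (g : G) (x : A) :
    hΘ.toLinearIsometryEquiv g x = Θ g x :=
  rfl

lemma orbitAverage_mem_tracialStates (hΘ : IsStarAction Θ) {τ : WeakDual ℂ A}
    (hτ : τ ∈ tracialStates A) {F : Finset G} (hF : F.Nonempty) :
    StrongDual.toWeakDual (orbitAverage hΘ.toLinearIsometryEquiv (WeakDual.toStrongDual τ) F) ∈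
      tracialStates A := by
  obtain ⟨⟨hτ1, hτpos⟩, hτtr⟩ := hτ
  have hcard : (#F : ℂ) ≠ 0 := by exact_mod_cast hF.card_pos.ne'
  refine ⟨⟨?_, fun a => ?_⟩, fun x y => ?_⟩ <;>
    simp only [StrongDual.toWeakDual_apply, orbitAverage_apply, toLinearIsometryEquiv_apply]
  · simp [hτ1, hcard]
  · refine mul_nonneg (by positivity) (sum_nonneg fun g _ => ?_)
    rw [map_mul, hΘ]
    exact hτpos _
  · simp only [map_mul]
    exact congrArg _ (sum_congr rfl fun g _ => hτtr _ _)

end IsStarAction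

end TracialStates

theorem stmt2_general {A G : Type*} [NormedRing A] [StarRing A] [CStarRing A] [NormedAlgebra ℂ A]
    [CompleteSpace A] [StarModule ℂ A] [Group G] [DecidableEq G]
    (Θ : G →* (A ≃ₐ[ℂ] A)) (hΘ : IsStarAction Θ)
    (htrace : ∃ τ : WeakDual ℂ A, IsState τ ∧ ∀ x y : A, τ (x * y) = τ (y * x))
    (hamen : ∃ F : ℕ → Finset G, RightFolner F) :
    ∃ φ : WeakDual ℂ A, IsState φ ∧ (∀ x y : A, φ (x * y) = φ (y * x)) ∧
      ∀ (g : G) (x : A), φ (Θ g x) = φ x := by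
  obtain ⟨τ, hτ⟩ := htrace
  obtain ⟨F, hF⟩ := hamen
  obtain ⟨φ, ⟨hφ, hφtr⟩, hφinv⟩ := hF.exists_invariant_mem hΘ.toLinearIsometryEquiv
    (WeakDual.toStrongDual τ) isClosed_tracialStates
    fun k => hΘ.orbitAverage_mem_tracialStates hτ (hF.1 k)
  exact ⟨φ, hφ, hφtr, hφinv⟩

/-- If the tracial state space is nonempty and `G` is amenable, there is a Θ-invariant
tracial state. -/
theorem stmt2 {A G : Type*} [NormedRing A] [StarRing A] [CStarRing A] [NormedAlgebra ℂ A]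
    [CompleteSpace A] [StarModule ℂ A] [Group G] [Countable G] [DecidableEq G]
    (Θ : G →* (A ≃ₐ[ℂ] A)) (hΘ : IsStarAction Θ)
    (htrace : ∃ τ : WeakDual ℂ A, IsState τ ∧ ∀ x y : A, τ (x * y) = τ (y * x))
    (hamen : ∃ F : ℕ → Finset G, RightFolner F) :
    ∃ φ : WeakDual ℂ A, IsState φ ∧ (∀ x y : A, φ (x * y) = φ (y * x)) ∧
      ∀ (g : G) (x : A), φ (Θ g x) = φ x :=
  stmt2_general Θ hΘ htrace hamen
end

section
/- Let (𝔄, G, Θ) be a C*-dynamical system with G countable discrete amenable. Then (𝔄, G, Θ) is uniquely ergodic if and only if there exists a state φ on 𝔄 such that for every right Følner sequence (F_k) for G and every x ∈ 𝔄, the averages (1/|F_k|) Σ_{g∈F_k} Θ_g x converge in norm to φ(x)·1. -/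
/-!
If `φ` is the unique invariant state, take arbitrary states `ψ k`: the states `ψ k ∘ Avg_{F k}`
are asymptotically invariant along a right Følner sequence, so by weak-* compactness of the state
space every cluster point is an invariant state, hence `φ`, and they converge weak-* to `φ`.
Evaluating at `x` gives `ψ k (Avg_{F k} x - φ x • 1) → 0` for every choice of states, and this
forces norm convergence because the norm of a self-adjoint element is attained by a state
(a character of the commutative C⋆-algebra it generates, extended by Hahn–Banach: a unital
functional of norm one is a state).

Conversely, norm convergence along one Følner sequence makes `φ` invariant, and any invariant
state `ψ` satisfies `ψ x = ψ (Avg_{F k} x) → φ x`.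
-/

open scoped ComplexOrder symmDiff

open Filter Topology

lemma norm_sum_sub_sum_le {ι E : Type*} [SeminormedAddCommGroup E] [DecidableEq ι]
    (s t : Finset ι) (f : ι → E) {C : ℝ} (hf : ∀ i, ‖f i‖ ≤ C) :
    ‖∑ i ∈ s, f i - ∑ i ∈ t, f i‖ ≤ (s ∆ t).card * C := by
  have hC : ∀ u : Finset ι, ‖∑ i ∈ u, f i‖ ≤ u.card * C := fun u => by
    simpa using norm_sum_le_of_le u fun i _ => hf i
  rw [← Finset.sum_sdiff_sub_sum_sdiff, Finset.symmDiff_def,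
    Finset.card_union_of_disjoint disjoint_sdiff_sdiff, Nat.cast_add, add_mul]
  exact (norm_sub_le _ _).trans (add_le_add (hC _) (hC _))

section Averages

variable {A G : Type*} [NormedRing A] [NormedAlgebra ℂ A] [Group G] (Θ : G →* (A ≃ₐ[ℂ] A))

lemma avg_add (F : Finset G) (x y : A) : avg Θ F (x + y) = avg Θ F x + avg Θ F y := by
  simp only [avg, map_add, Finset.sum_add_distrib, smul_add]

lemma avg_smul (F : Finset G) (c : ℂ) (x : A) : avg Θ F (c • x) = c • avg Θ F x := by
  simp only [avg, map_smul, ← Finset.smul_sum, smul_comm c]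

lemma avg_one {F : Finset G} (hF : F.Nonempty) : avg Θ F 1 = 1 := by
  rw [avg, Finset.sum_congr rfl fun g _ => map_one (Θ g), Finset.sum_const,
    ← Nat.cast_smul_eq_nsmul ℂ, smul_smul, inv_mul_cancel₀ (by exact_mod_cast hF.card_pos.ne'),
    one_smul]

lemma apply_avg_eq_of_invariant {𝓕 : Type*} [FunLike 𝓕 A ℂ] [LinearMapClass 𝓕 ℂ A ℂ]
    {F : Finset G} (hF : F.Nonempty) {f : 𝓕}
    (hf : ∀ g x, f (Θ g x) = f x) (x : A) : f (avg Θ F x) = f x := by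
  rw [avg, map_smul, map_sum, Finset.sum_congr rfl fun g _ => hf g x, Finset.sum_const,
    nsmul_eq_mul, smul_eq_mul, ← mul_assoc, inv_mul_cancel₀ (by exact_mod_cast hF.card_pos.ne'),
    one_mul]

variable {Θ}

lemma norm_avg_le (hΘ : ∀ g x, ‖Θ g x‖ ≤ ‖x‖) (F : Finset G) (x : A) : ‖avg Θ F x‖ ≤ ‖x‖ := by
  rcases F.eq_empty_or_nonempty with rfl | hF
  · simp [avg]
  calc ‖avg Θ F x‖ ≤ (F.card : ℝ)⁻¹ * (F.card * ‖x‖) := by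
        rw [avg, norm_smul, norm_inv, Complex.norm_natCast]
        gcongr
        simpa using norm_sum_le_of_le F fun g _ => hΘ g x
    _ = ‖x‖ := by field_simp [hF.card_pos.ne']

lemma norm_avg_apply_sub_avg_le [DecidableEq G] (hΘ : ∀ g x, ‖Θ g x‖ ≤ ‖x‖) (F : Finset G)
    (g : G) (x : A) :
    ‖avg Θ F (Θ g x) - avg Θ F x‖ ≤ ((F.image (· * g) ∆ F).card : ℝ) / F.card * ‖x‖ := by
  have hshift : ∑ h ∈ F, Θ h (Θ g x) = ∑ h ∈ F.image (· * g), Θ h x := by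
    rw [Finset.sum_image fun a _ b _ => mul_right_cancel]
    simp [map_mul]
  rw [avg, avg, ← smul_sub, hshift, norm_smul, norm_inv, Complex.norm_natCast, div_mul_eq_mul_div,
    inv_mul_eq_div]
  gcongr
  exact norm_sum_sub_sum_le _ _ _ fun h => hΘ h x

lemma RightFolner.tendsto_avg_apply_sub_avg [DecidableEq G] (hΘ : ∀ g x, ‖Θ g x‖ ≤ ‖x‖)
    {F : ℕ → Finset G} (hF : RightFolner F) (g : G) (x : A) :
    Tendsto (fun k => avg Θ (F k) (Θ g x) - avg Θ (F k) x) atTop (𝓝 0) := by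
  refine squeeze_zero_norm (fun k => norm_avg_apply_sub_avg_le hΘ (F k) g x) ?_
  simpa using (hF.2 g).mul_const ‖x‖

end Averages

lemma apply_realPart_add_I_mul_imaginaryPart {A : Type*} [CStarAlgebra A] (φ : WeakDual ℂ A)
    (a : A) : φ (realPart a : A) + Complex.I * φ (imaginaryPart a : A) = φ a := by
  rw [← smul_eq_mul, ← map_smul, ← map_add, realPart_add_I_smul_imaginaryPart]

namespace IsState

variable {A : Type*} [CStarAlgebra A] {φ : WeakDual ℂ A}

lemma apply_algebraMap (hφ : IsState φ) (r : ℝ) : φ (algebraMap ℝ A r) = r := by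
  rw [Algebra.algebraMap_eq_smul_one, ← Complex.coe_smul, map_smul, hφ.1, smul_eq_mul, mul_one]

variable [PartialOrder A] [StarOrderedRing A]

lemma apply_nonneg (hφ : IsState φ) {x : A} (hx : 0 ≤ x) : 0 ≤ φ x := by
  obtain ⟨s, rfl⟩ := CStarAlgebra.nonneg_iff_eq_star_mul_self.mp hx
  exact hφ.2 s

lemma apply_mem_Icc (hφ : IsState φ) {z : A} (hz : IsSelfAdjoint z) :
    φ z ∈ Set.Icc (-(‖z‖ : ℂ)) ‖z‖ := by
  have hle := hφ.apply_nonneg (sub_nonneg.mpr hz.le_algebraMap_norm_self)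
  have hge := hφ.apply_nonneg (sub_nonneg.mpr hz.neg_algebraMap_norm_le_self)
  rw [map_sub, hφ.apply_algebraMap, sub_nonneg] at hle
  rw [map_sub, map_neg, hφ.apply_algebraMap, sub_nonneg] at hge
  exact ⟨hge, hle⟩

lemma apply_eq_re (hφ : IsState φ) {z : A} (hz : IsSelfAdjoint z) : φ z = (φ z).re := by
  have h := (hφ.apply_mem_Icc hz).2
  rw [Complex.le_def] at h
  exact Complex.ext rfl (by simpa using h.2)

lemma norm_apply_le_of_isSelfAdjoint (hφ : IsState φ) {z : A} (hz : IsSelfAdjoint z) :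
    ‖φ z‖ ≤ ‖z‖ := by
  obtain ⟨hge, hle⟩ := hφ.apply_mem_Icc hz
  rw [Complex.le_def] at hge hle
  rw [hφ.apply_eq_re hz, Complex.norm_real, Real.norm_eq_abs, abs_le]
  simp only [Complex.neg_re, Complex.ofReal_re] at hge hle
  exact ⟨hge.1, hle.1⟩

lemma apply_realPart (hφ : IsState φ) (a : A) : φ (realPart a : A) = (φ a).re := by
  rw [← apply_realPart_add_I_mul_imaginaryPart φ a, hφ.apply_eq_re (realPart a).2,
    hφ.apply_eq_re (imaginaryPart a).2]
  simp

lemma apply_imaginaryPart (hφ : IsState φ) (a : A) : φ (imaginaryPart a : A) = (φ a).im := by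
  rw [← apply_realPart_add_I_mul_imaginaryPart φ a, hφ.apply_eq_re (realPart a).2,
    hφ.apply_eq_re (imaginaryPart a).2]
  simp

lemma norm_apply_le (hφ : IsState φ) (a : A) : ‖φ a‖ ≤ 2 * ‖a‖ :=
  calc ‖φ a‖ ≤ ‖φ (realPart a : A)‖ + ‖φ (imaginaryPart a : A)‖ := by
        rw [← apply_realPart_add_I_mul_imaginaryPart]
        exact (norm_add_le _ _).trans_eq (by rw [norm_mul, Complex.norm_I, one_mul])
    _ ≤ ‖a‖ + ‖a‖ := add_le_add
        ((hφ.norm_apply_le_of_isSelfAdjoint (realPart a).2).trans (realPart.norm_le a))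
        ((hφ.norm_apply_le_of_isSelfAdjoint (imaginaryPart a).2).trans (imaginaryPart.norm_le a))
    _ = 2 * ‖a‖ := by ring

end IsState

variable {A : Type*} [CStarAlgebra A] [PartialOrder A] [StarOrderedRing A] in
lemma isCompact_setOf_isState : IsCompact {φ : WeakDual ℂ A | IsState φ} := by
  refine WeakDual.isCompact_of_bounded_of_closed ?_ ?_
  · refine (Metric.isBounded_closedBall (x := (0 : StrongDual ℂ A)) (r := 2)).subset fun φ hφ => ?_
    rw [Metric.mem_closedBall, dist_zero_right]
    exact ContinuousLinearMap.opNorm_le_bound _ zero_le_two (IsState.norm_apply_le hφ)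
  · simp only [IsState, Set.ofPred_and, Set.ofPred_forall]
    exact (isClosed_eq (WeakDual.eval_continuous 1) continuous_const).inter
      (isClosed_iInter fun a => isClosed_le continuous_const (WeakDual.eval_continuous _))

section NormingStates

variable {A : Type*} [CStarAlgebra A]

lemma norm_add_I_mul_smul_one_sq_le [Nontrivial A] {z : A} (hz : IsSelfAdjoint z) (r : ℝ) :
    ‖z + (Complex.I * r) • (1 : A)‖ ^ 2 ≤ ‖z‖ ^ 2 + r ^ 2 := by
  obtain ⟨c, hc_def⟩ : ∃ c : ℂ, Complex.I * r = c := ⟨_, rfl⟩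
  rw [hc_def]
  have hstar : star (z + c • (1 : A)) * (z + c • 1) = z * z + ((r : ℂ) ^ 2) • 1 := by
    have hc : star c = -c := by simp [← hc_def]
    have hcc : -c * c = (r : ℂ) ^ 2 := by
      rw [← hc_def, neg_mul, mul_mul_mul_comm, Complex.I_mul_I]; ring
    rw [star_add, star_smul, star_one, hz.star_eq, hc, ← hcc]
    simp only [add_mul, mul_add, mul_one, one_mul, smul_mul_assoc, mul_smul_comm]
    module
  rw [sq, ← CStarRing.norm_star_mul_self, hstar]
  calc ‖z * z + ((r : ℂ) ^ 2) • (1 : A)‖ ≤ ‖z‖ * ‖z‖ + r ^ 2 := by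
        refine (norm_add_le _ _).trans (add_le_add (norm_mul_le _ _) ?_)
        rw [norm_smul, CStarRing.norm_one, mul_one, norm_pow, Complex.norm_real, Real.norm_eq_abs,
          sq_abs]
    _ = ‖z‖ ^ 2 + r ^ 2 := by ring

lemma im_apply_eq_zero_of_norm_le_one {f : StrongDual ℂ A} (hf : ‖f‖ ≤ 1) (h1 : f 1 = 1)
    {z : A} (hz : IsSelfAdjoint z) : (f z).im = 0 := by
  have : Nontrivial A := ⟨⟨1, 0, fun h => by simp [h] at h1⟩⟩
  have key (r : ℝ) : (f z).re ^ 2 + ((f z).im + r) ^ 2 ≤ ‖z‖ ^ 2 + r ^ 2 := by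
    have hfu : f (z + (Complex.I * r) • (1 : A)) = f z + Complex.I * r := by
      rw [map_add, map_smul, h1, smul_eq_mul, mul_one]
    calc (f z).re ^ 2 + ((f z).im + r) ^ 2 = ‖f (z + (Complex.I * r) • (1 : A))‖ ^ 2 := by
          rw [hfu, Complex.sq_norm, Complex.normSq_apply]; simp; ring
      _ ≤ ‖z + (Complex.I * r) • (1 : A)‖ ^ 2 := by
          gcongr
          exact (f.le_opNorm _).trans (mul_le_of_le_one_left (norm_nonneg _) hf)
      _ ≤ ‖z‖ ^ 2 + r ^ 2 := norm_add_I_mul_smul_one_sq_le hz r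
  by_contra hne
  -- for this `r`, `key r` reads `‖z‖ ^ 2 + 1 ≤ ‖z‖ ^ 2`
  set r := (‖z‖ ^ 2 + 1 - (f z).re ^ 2 - (f z).im ^ 2) / (2 * (f z).im)
  have hr : 2 * (f z).im * r = ‖z‖ ^ 2 + 1 - (f z).re ^ 2 - (f z).im ^ 2 := by
    simp only [r]
    field_simp
  nlinarith [key r]

variable [PartialOrder A] [StarOrderedRing A]

lemma IsState.of_norm_le_one {φ : WeakDual ℂ A} (hφ : ‖WeakDual.toStrongDual φ‖ ≤ 1)
    (h1 : φ 1 = 1) : IsState φ := by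
  have : Nontrivial A := ⟨⟨1, 0, fun h => by simp [h] at h1⟩⟩
  refine ⟨h1, fun a => ?_⟩
  set b := star a * a
  have hb : 0 ≤ b := star_mul_self_nonneg a
  have hw : ‖algebraMap ℝ A ‖b‖ - b‖ ≤ ‖b‖ := by
    refine (CStarAlgebra.norm_le_norm_of_nonneg_of_le
      (sub_nonneg.mpr (IsSelfAdjoint.of_nonneg hb).le_algebraMap_norm_self)
      (sub_le_self _ hb)).trans_eq ?_
    rw [norm_algebraMap', norm_norm]
  have hφw : ‖(‖b‖ : ℂ) - φ b‖ ≤ ‖b‖ := by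
    calc ‖(‖b‖ : ℂ) - φ b‖ = ‖φ (algebraMap ℝ A ‖b‖ - b)‖ := by
          rw [map_sub, Algebra.algebraMap_eq_smul_one, ← Complex.coe_smul, map_smul, h1,
            smul_eq_mul, mul_one]
      _ ≤ ‖algebraMap ℝ A ‖b‖ - b‖ :=
          ((WeakDual.toStrongDual φ).le_opNorm _).trans (mul_le_of_le_one_left (norm_nonneg _) hφ)
      _ ≤ ‖b‖ := hw
  have him : (φ b).im = 0 :=
    im_apply_eq_zero_of_norm_le_one hφ h1 (IsSelfAdjoint.star_mul_self a)
  have hre := (Complex.abs_re_le_norm _).trans hφw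
  rw [Complex.sub_re, Complex.ofReal_re, abs_le] at hre
  exact Complex.le_def.mpr ⟨by simpa using hre.2, him.symm⟩

lemma exists_isState_norm_apply_eq [Nontrivial A] {y : A} (hy : IsSelfAdjoint y) :
    ∃ ψ : WeakDual ℂ A, IsState ψ ∧ ‖ψ y‖ = ‖y‖ := by
  obtain ⟨t, ht, hty⟩ := spectrum.exists_nnnorm_eq_spectralRadius y
  rw [hy.spectralRadius_eq_nnnorm, ENNReal.coe_inj] at hty
  have := hy.isStarNormal
  let S := StarAlgebra.elemental ℂ y
  obtain ⟨χ, hχ⟩ := WeakDual.CharacterSpace.mem_spectrum_iff_exists.mp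
    (show t ∈ spectrum ℂ (⟨y, StarAlgebra.elemental.self_mem ℂ y⟩ : S) by
      rwa [StarSubalgebra.spectrum_eq (hS := StarAlgebra.elemental.isClosed ℂ y)])
  obtain ⟨f, hfχ, hf⟩ := exists_extension_norm_eq (Subalgebra.toSubmodule S.toSubalgebra)
    (WeakDual.toStrongDual (χ : WeakDual ℂ S))
  have h1 : f 1 = 1 := (hfχ ⟨1, one_mem S⟩).trans (map_one χ)
  refine ⟨StrongDual.toWeakDual f, .of_norm_le_one ?_ h1, ?_⟩
  · change ‖f‖ ≤ 1
    rw [hf]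
    exact (WeakDual.CharacterSpace.norm_le_norm_one χ).trans_eq CStarRing.norm_one
  · rw [StrongDual.coe_toWeakDual, hfχ ⟨y, StarAlgebra.elemental.self_mem ℂ y⟩]
    exact (congrArg norm hχ).trans (congrArg NNReal.toReal hty)

end NormingStates

section DetectingByStates

variable {A ι : Type*} [CStarAlgebra A] [PartialOrder A] [StarOrderedRing A] {l : Filter ι}

lemma tendsto_zero_of_forall_isState_of_isSelfAdjoint {y : ι → A} (hy : ∀ k, IsSelfAdjoint (y k))
    (h : ∀ ψ : ι → WeakDual ℂ A, (∀ k, IsState (ψ k)) → Tendsto (fun k => ψ k (y k)) l (𝓝 0)) :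
    Tendsto y l (𝓝 0) := by
  cases subsingleton_or_nontrivial A
  · exact tendsto_const_nhds.congr fun k => Subsingleton.elim 0 (y k)
  choose ψ hψ hψy using fun k => exists_isState_norm_apply_eq (hy k)
  rw [tendsto_zero_iff_norm_tendsto_zero]
  simpa only [hψy, norm_zero] using (h ψ hψ).norm

lemma tendsto_zero_of_forall_isState {y : ι → A}
    (h : ∀ ψ : ι → WeakDual ℂ A, (∀ k, IsState (ψ k)) → Tendsto (fun k => ψ k (y k)) l (𝓝 0)) :
    Tendsto y l (𝓝 0) := by
  have hre : Tendsto (fun k => (realPart (y k) : A)) l (𝓝 0) := by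
    refine tendsto_zero_of_forall_isState_of_isSelfAdjoint (fun k => (realPart (y k)).2)
      fun ψ hψ => ?_
    simp only [(hψ _).apply_realPart]
    simpa [Function.comp_def] using
      ((Complex.continuous_ofReal.comp Complex.continuous_re).tendsto 0).comp (h ψ hψ)
  have him : Tendsto (fun k => (imaginaryPart (y k) : A)) l (𝓝 0) := by
    refine tendsto_zero_of_forall_isState_of_isSelfAdjoint (fun k => (imaginaryPart (y k)).2)
      fun ψ hψ => ?_
    simp only [(hψ _).apply_imaginaryPart]
    simpa [Function.comp_def] using
      ((Complex.continuous_ofReal.comp Complex.continuous_im).tendsto 0).comp (h ψ hψ)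
  simpa only [realPart_add_I_smul_imaginaryPart, smul_zero, add_zero] using
    hre.add (him.const_smul Complex.I)

end DetectingByStates

section Ergodic

variable {A G : Type*} [CStarAlgebra A] [Group G] {Θ : G →* (A ≃ₐ[ℂ] A)}

lemma IsStarAction.norm_apply_s17 (hΘ : IsStarAction Θ) (g : G) (x : A) : ‖Θ g x‖ = ‖x‖ :=
  StarAlgEquiv.norm_map ({ Θ g with map_star' := hΘ g, map_smul' := map_smul (Θ g) } : A ≃⋆ₐ[ℂ] A) x

variable (Θ) in
def IsInvariantState (φ : WeakDual ℂ A) : Prop :=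
  IsState φ ∧ ∀ (g : G) (x : A), φ (Θ g x) = φ x

section Folner

variable [DecidableEq G] {F : ℕ → Finset G}

lemma RightFolner.isInvariantState_of_tendsto_avg (hF : RightFolner F) (hΘ : IsStarAction Θ)
    {φ : WeakDual ℂ A} (hφ : IsState φ)
    (hconv : ∀ x, Tendsto (fun k => avg Θ (F k) x) atTop (𝓝 (φ x • 1))) :
    IsInvariantState Θ φ := by
  refine ⟨hφ, fun g x => ?_⟩
  have h : φ (Θ g x) • (1 : A) = φ x • 1 := tendsto_nhds_unique (hconv (Θ g x)) (by
    simpa using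
      (hconv x).add (hF.tendsto_avg_apply_sub_avg (fun g x => (hΘ.norm_apply_s17 g x).le) g x))
  simpa [hφ.1] using congrArg φ h

lemma RightFolner.eq_of_tendsto_avg (hF : RightFolner F) {φ ψ : WeakDual ℂ A}
    (hψ : IsInvariantState Θ ψ)
    (hconv : ∀ x, Tendsto (fun k => avg Θ (F k) x) atTop (𝓝 (φ x • 1))) :
    ψ = φ := by
  refine DFunLike.ext _ _ fun x => ?_
  have hψx : Tendsto (fun k => ψ (avg Θ (F k) x)) atTop (𝓝 (ψ (φ x • 1))) :=
    ((map_continuous ψ).tendsto _).comp (hconv x)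
  have hψavg (k : ℕ) : ψ (avg Θ (F k) x) = ψ x := apply_avg_eq_of_invariant Θ (hF.1 k) hψ.2 x
  simp only [hψavg, map_smul, hψ.1.1, smul_eq_mul, mul_one] at hψx
  exact tendsto_nhds_unique tendsto_const_nhds hψx

end Folner

variable [PartialOrder A] [StarOrderedRing A]

lemma IsState.exists_apply_eq_apply_avg (hΘ : IsStarAction Θ) {ψ : WeakDual ℂ A}
    (hψ : IsState ψ) {F : Finset G} (hF : F.Nonempty) :
    ∃ ω : WeakDual ℂ A, IsState ω ∧ ∀ x, ω x = ψ (avg Θ F x) := by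
  let ωₗ : A →ₗ[ℂ] ℂ :=
    { toFun := fun x => ψ (avg Θ F x)
      map_add' := fun x y => by simp only [avg_add, map_add]
      map_smul' := fun c x => by simp only [avg_smul, map_smul, RingHom.id_apply] }
  refine ⟨ωₗ.mkContinuous 2 fun x => (hψ.norm_apply_le _).trans ?_, ⟨?_, fun a => ?_⟩, fun _ => rfl⟩
  · gcongr
    exact norm_avg_le (fun g x => (hΘ.norm_apply_s17 g x).le) F x
  · exact (congrArg ψ (avg_one Θ hF)).trans hψ.1
  · change 0 ≤ ψ (avg Θ F (star a * a))
    have hterm (g : G) : Θ g (star a * a) = star (Θ g a) * Θ g a := by rw [map_mul, hΘ]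
    simp only [avg, map_smul, map_sum, hterm, smul_eq_mul]
    exact mul_nonneg (by positivity) (Finset.sum_nonneg fun g _ => hψ.2 (Θ g a))

lemma tendsto_of_forall_isInvariantState_eq {ι : Type*} {l : Filter ι} {φ : WeakDual ℂ A}
    (huniq : ∀ ψ, IsInvariantState Θ ψ → ψ = φ) {ω : ι → WeakDual ℂ A} (hω : ∀ k, IsState (ω k))
    (hinv : ∀ g x, Tendsto (fun k => ω k (Θ g x) - ω k x) l (𝓝 0)) : Tendsto ω l (𝓝 φ) := by
  refine isCompact_setOf_isState.tendsto_nhds_of_unique_mapClusterPt (.of_forall hω)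
    fun ψ hψ hcl => huniq ψ ⟨hψ, fun g x => sub_eq_zero.mp ?_⟩
  have hcont : Continuous fun μ : WeakDual ℂ A => μ (Θ g x) - μ x :=
    (WeakDual.eval_continuous _).sub (WeakDual.eval_continuous _)
  exact eq_of_nhds_neBot ((hcl.continuousAt_comp hcont.continuousAt).clusterPt.mono (hinv g x))

lemma RightFolner.tendsto_avg_of_forall_isInvariantState_eq [DecidableEq G] {F : ℕ → Finset G}
    (hF : RightFolner F) (hΘ : IsStarAction Θ) {φ : WeakDual ℂ A} (huniq : ∀ ψ, IsInvariantState Θ ψ → ψ = φ)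
    (x : A) : Tendsto (fun k => avg Θ (F k) x) atTop (𝓝 (φ x • 1)) := by
  rw [← tendsto_sub_nhds_zero_iff]
  refine tendsto_zero_of_forall_isState fun ψ hψ => ?_
  choose ω hω hωψ using fun k => (hψ k).exists_apply_eq_apply_avg hΘ (hF.1 k)
  have hωφ : Tendsto ω atTop (𝓝 φ) := by
    refine tendsto_of_forall_isInvariantState_eq huniq hω fun g a => ?_
    simp only [hωψ, ← map_sub]
    refine squeeze_zero_norm (fun k => (hψ k).norm_apply_le _) ?_
    simpa using ((hF.tendsto_avg_apply_sub_avg (fun g x => (hΘ.norm_apply_s17 g x).le) g a).norm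
      |>.const_mul 2)
  have hωx := ((WeakDual.eval_continuous x).tendsto φ).comp hωφ
  simpa [Function.comp_def, hωψ, (hψ _).1] using hωx.sub_const (φ x)

end Ergodic

theorem stmt17_general {A G : Type*} [NormedRing A] [StarRing A] [CStarRing A] [NormedAlgebra ℂ A]
    [CompleteSpace A] [StarModule ℂ A] [Group G] [DecidableEq G]
    (Θ : G →* (A ≃ₐ[ℂ] A)) (hΘ : IsStarAction Θ)
    (hamen : ∃ F : ℕ → Finset G, RightFolner F) :
    (∃! φ : WeakDual ℂ A, IsState φ ∧ ∀ (g : G) (x : A), φ (Θ g x) = φ x) ↔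
      ∃ φ : WeakDual ℂ A, IsState φ ∧ ∀ F : ℕ → Finset G, RightFolner F →
        ∀ x : A, Filter.Tendsto (fun k => ‖avg Θ (F k) x - φ x • (1 : A)‖)
          Filter.atTop (nhds 0) := by
  let _ : CStarAlgebra A := {}
  let _ := CStarAlgebra.spectralOrder A
  have := CStarAlgebra.spectralOrderedRing A
  obtain ⟨F₀, hF₀⟩ := hamen
  simp only [← tendsto_iff_norm_sub_tendsto_zero]
  constructor
  · rintro ⟨φ, hφ, huniq⟩
    exact ⟨φ, hφ.1, fun F hF => hF.tendsto_avg_of_forall_isInvariantState_eq hΘ huniq⟩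
  · rintro ⟨φ, hφ, hconv⟩
    exact ⟨φ, hF₀.isInvariantState_of_tendsto_avg hΘ hφ (hconv F₀ hF₀),
      fun ψ hψ => hF₀.eq_of_tendsto_avg hψ (hconv F₀ hF₀)⟩

/-- A C*-dynamical system over a countable discrete amenable group is uniquely ergodic
iff there is a state `φ` such that, for every right Følner sequence, the ergodic
averages of every element converge in norm to `φ(x)·1`. -/
theorem stmt17 {A G : Type*} [NormedRing A] [StarRing A] [CStarRing A] [NormedAlgebra ℂ A]
    [CompleteSpace A] [StarModule ℂ A] [Nontrivial A] [Group G] [Countable G] [DecidableEq G]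
    (Θ : G →* (A ≃ₐ[ℂ] A)) (hΘ : IsStarAction Θ)
    (hamen : ∃ F : ℕ → Finset G, RightFolner F) :
    (∃! φ : WeakDual ℂ A, IsState φ ∧ ∀ (g : G) (x : A), φ (Θ g x) = φ x) ↔
      ∃ φ : WeakDual ℂ A, IsState φ ∧ ∀ F : ℕ → Finset G, RightFolner F →
        ∀ x : A, Filter.Tendsto (fun k => ‖avg Θ (F k) x - φ x • (1 : A)‖)
          Filter.atTop (nhds 0) :=
  stmt17_general Θ hΘ hamen
end
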